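/- arXiv:1812.03257 — 3 statements merged into one kernel-verified Lean document; each statement's English description precedes it below -/
import Mathlib

section
/- With m as in the model Riemann–Hilbert solution m(z) = (1/2)[[ν+ν⁻¹, (2/(i·conj(q₋)))(ν−ν⁻¹)],[(i·conj(q₋)/2)(ν−ν⁻¹), ν+ν⁻¹]] where ν(z) = ((z − i q₀²/2)/(z + i q₀²/2))^{1/4}, ν(∞)=1, and |q₋| = q₀ > 0, one has −2·lim_{z→∞} z·m₁₂(z) = q₋. -/
open Complex Filter Matrix Topology Bornology

/-!
Put `u = 1 / z` and `c = i q₀² / 2`. Then `ν(z) = w(u)^{1/4}` with `w(u) = (1 - c u) / (1 + c u)`,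
which is holomorphic at `u = 0` with `w(0) = 1` and `w'(0) = -2c`. Hence `z (ν - ν⁻¹)` is the
difference quotient at `0` of `u ↦ w(u)^{1/4} - w(u)^{-1/4}`, whose derivative there is `-c`.
Multiplying by `-2 / (i conj q₋)` and using `q₀² = q₋ conj q₋` gives `q₋`.
-/

theorem HasDerivAt.tendsto_mul_inv_cobounded {𝕜 : Type*} [NontriviallyNormedField 𝕜]
    {f : 𝕜 → 𝕜} {f' : 𝕜} (hf : HasDerivAt f f' 0) (hf0 : f 0 = 0) :
    Tendsto (fun z => z * f z⁻¹) (cobounded 𝕜) (𝓝 f') := by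
  refine (hf.tendsto_slope_zero.comp tendsto_inv₀_cobounded').congr fun z => ?_
  simp [hf0]

theorem hasDerivAt_cayley_cpow_sub_cpow_neg (a c : ℂ) :
    HasDerivAt (fun u : ℂ => ((1 - c * u) / (1 + c * u)) ^ a - ((1 - c * u) / (1 + c * u)) ^ (-a))
      (-4 * a * c) 0 := by
  have hcayley : HasDerivAt (fun u : ℂ => (1 - c * u) / (1 + c * u)) (-2 * c) 0 := by
    have h := ((hasDerivAt_id (0 : ℂ)).const_mul c |>.const_sub 1).div
      ((hasDerivAt_id (0 : ℂ)).const_mul c |>.const_add 1) (by simp)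
    exact h.congr_deriv (by simp; ring)
  have hslit : (1 - c * 0) / (1 + c * 0) ∈ slitPlane := by simp
  exact ((hcayley.cpow_const hslit).sub (hcayley.cpow_const hslit)).congr_deriv (by simp; ring)

theorem tendsto_mul_cayley_cpow_sub_cpow_neg (a c : ℂ) :
    Tendsto (fun z : ℂ => z * (((z - c) / (z + c)) ^ a - ((z - c) / (z + c)) ^ (-a)))
      (cobounded ℂ) (𝓝 (-4 * a * c)) := by
  refine ((hasDerivAt_cayley_cpow_sub_cpow_neg a c).tendsto_mul_inv_cobounded
    (by simp)).congr' ?_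
  filter_upwards [eventually_ne_cobounded 0] with z hz
  have hcayley : (1 - c * z⁻¹) / (1 + c * z⁻¹) = (z - c) / (z + c) := by
    rw [← mul_div_mul_left _ _ hz]; congr 1 <;> field_simp
  rw [hcayley]

theorem stmt_11_general (q₀ : ℝ) (qm : ℂ) (hqm : ‖qm‖ = q₀)
    (ν : ℂ → ℂ)
    (hν : ∀ z, ν z = ((z - I * (q₀ : ℂ) ^ 2 / 2) / (z + I * (q₀ : ℂ) ^ 2 / 2)) ^ ((1 : ℂ) / 4))
    (m : ℂ → Matrix (Fin 2) (Fin 2) ℂ)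
    (hm : ∀ z, m z = (1 / 2 : ℂ) •
      !![ν z + (ν z)⁻¹, (2 / (I * (starRingEnd ℂ) qm)) * (ν z - (ν z)⁻¹);
         (I * (starRingEnd ℂ) qm / 2) * (ν z - (ν z)⁻¹), ν z + (ν z)⁻¹]) :
    Tendsto (fun z : ℂ => -2 * (z * m z 0 1)) (comap (fun w : ℂ => ‖w‖) atTop) (nhds qm) := by
  have hq₀_sq : (q₀ : ℂ) ^ 2 = qm * (starRingEnd ℂ) qm := by
    rw [mul_conj, normSq_eq_norm_sq, hqm]; push_cast; rfl
  have hlimit : -2 / (I * (starRingEnd ℂ) qm) * (-4 * (1 / 4) * (I * (q₀ : ℂ) ^ 2 / 2)) = qm := by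
    rcases eq_or_ne qm 0 with rfl | hqm0
    · simp
    · have : (starRingEnd ℂ) qm ≠ 0 := (map_ne_zero _).mpr hqm0
      rw [hq₀_sq]; field_simp
  rw [comap_norm_atTop, ← hlimit]
  refine ((tendsto_mul_cayley_cpow_sub_cpow_neg _ _).const_mul _).congr fun z => ?_
  have hentry : m z 0 1 = 1 / 2 * (2 / (I * (starRingEnd ℂ) qm) * (ν z - (ν z)⁻¹)) := by
    simp [hm]
  rw [hentry, hν, ← cpow_neg]
  ring

theorem stmt_11 (q₀ : ℝ) (hq₀ : 0 < q₀) (qm : ℂ) (hqm : ‖qm‖ = q₀)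
    (ν : ℂ → ℂ)
    (hν : ∀ z, ν z = ((z - I * (q₀ : ℂ) ^ 2 / 2) / (z + I * (q₀ : ℂ) ^ 2 / 2)) ^ ((1 : ℂ) / 4))
    (m : ℂ → Matrix (Fin 2) (Fin 2) ℂ)
    (hm : ∀ z, m z = (1 / 2 : ℂ) •
      !![ν z + (ν z)⁻¹, (2 / (I * (starRingEnd ℂ) qm)) * (ν z - (ν z)⁻¹);
         (I * (starRingEnd ℂ) qm / 2) * (ν z - (ν z)⁻¹), ν z + (ν z)⁻¹]) :
    Tendsto (fun z : ℂ => -2 * (z * m z 0 1)) (comap (fun w : ℂ => ‖w‖) atTop) (nhds qm) :=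
  stmt_11_general q₀ qm hqm ν hν m hm
end

section
/- Let ρ : ℝ → ℂ be continuous with 1 − s·ρ(s)·conj(ρ(s)) > 0 and log(1 − s·ρ(s)·conj(ρ(s))) integrable on (−∞, z₋] for some real z₋. Then δ(z) = exp((1/(2πi)) ∫_{−∞}^{z₋} log(1 − s ρ(s) conj(ρ(s)))/(s − z) ds) is analytic and nonvanishing on ℂ ∖ (−∞, z₋], and δ(z) → 1 as z → ∞ with dist(z, (−∞, z₋]) ≥ 1. -/
/-!
The exponent of `δ` is `(2πi)⁻¹` times the Cauchy transform `z ↦ ∫ g s / (s - z) ds` of the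
integrable density `g s = log (1 - s ‖ρ s‖²)` on `(-∞, z₋]`. Near a point off the closed half-line
the kernel and its `z`-derivative are dominated by `|g| / r` and `|g| / r²`, where `r` bounds the
distance to the half-line from below, so one may differentiate under the integral: the transform
is holomorphic off the half-line and `δ`, its exponential, is analytic and nonvanishing there.
Where the distance is at least `1` the integrand is dominated by `|g|` and tends pointwise to `0`
as `|z| → ∞`, so by dominated convergence the transform tends to `0` and `δ` to `1`.
-/

open Complex Filter MeasureTheory Topology Metric Bornology

lemma norm_div_le_inv_mul_norm {𝕜 : Type*} [NormedDivisionRing 𝕜] {a b : 𝕜} {r : ℝ}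
    (hr : 0 < r) (hb : r ≤ ‖b‖) : ‖a / b‖ ≤ r⁻¹ * ‖a‖ := by
  rw [norm_div, div_eq_inv_mul]
  gcongr

lemma hasDerivAt_const_div_const_sub {𝕜 : Type*} [NontriviallyNormedField 𝕜] (c : 𝕜)
    {w z : 𝕜} (hwz : w - z ≠ 0) :
    HasDerivAt (fun z => c / (w - z)) (c / (w - z) ^ 2) z :=
  ((hasDerivAt_const z c).div ((hasDerivAt_id z).const_sub w) hwz).congr_deriv (by simp)

lemma half_le_norm_sub_of_ball_subset_compl {E : Type*} [SeminormedAddCommGroup E]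
    {S : Set E} {z₀ w z : E} {ε : ℝ} (hball : ball z₀ ε ⊆ Sᶜ) (hw : w ∈ S)
    (hz : z ∈ ball z₀ (ε / 2)) : ε / 2 ≤ ‖w - z‖ := by
  have hwz₀ : ε ≤ dist w z₀ := not_lt.mp fun h => hball h hw
  have := dist_triangle w z z₀
  rw [mem_ball] at hz
  rw [← dist_eq_norm]
  linarith

noncomputable def cauchyTransform (μ : Measure ℝ) (f : ℝ → ℂ) (z : ℂ) : ℂ :=
  ∫ s, f s / ((s : ℂ) - z) ∂μ

section CauchyTransform

variable {μ : Measure ℝ} {f : ℝ → ℂ} {S : Set ℂ}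

lemma aestronglyMeasurable_div_ofReal_sub (hf : AEStronglyMeasurable f μ) (z : ℂ) :
    AEStronglyMeasurable (fun s : ℝ => f s / ((s : ℂ) - z)) μ :=
  hf.div₀ (continuous_ofReal.sub continuous_const).aestronglyMeasurable

lemma integrable_div_ofReal_sub (hf : Integrable f μ) {z : ℂ} {r : ℝ} (hr : 0 < r)
    (hz : ∀ᵐ (s : ℝ) ∂μ, r ≤ ‖(s : ℂ) - z‖) :
    Integrable (fun s : ℝ => f s / ((s : ℂ) - z)) μ :=
  (hf.norm.const_mul r⁻¹).mono' (aestronglyMeasurable_div_ofReal_sub hf.1 z)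
    (hz.mono fun _ hs => norm_div_le_inv_mul_norm hr hs)

lemma hasDerivAt_cauchyTransform (hf : Integrable f μ) (hS : IsClosed S)
    (hμS : ∀ᵐ (s : ℝ) ∂μ, (s : ℂ) ∈ S) {z₀ : ℂ} (hz₀ : z₀ ∉ S) :
    HasDerivAt (cauchyTransform μ f) (∫ s, f s / ((s : ℂ) - z₀) ^ 2 ∂μ) z₀ := by
  obtain ⟨ε, hε, hball⟩ := isOpen_iff.mp hS.isOpen_compl z₀ hz₀
  have hε2 : 0 < ε / 2 := half_pos hε
  have hfar : ∀ᵐ (s : ℝ) ∂μ, ∀ z ∈ ball z₀ (ε / 2), ε / 2 ≤ ‖(s : ℂ) - z‖ :=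
    hμS.mono fun _ hs _ hz => half_le_norm_sub_of_ball_subset_compl hball hs hz
  refine (hasDerivAt_integral_of_dominated_loc_of_deriv_le (ball_mem_nhds z₀ hε2)
    (Eventually.of_forall (aestronglyMeasurable_div_ofReal_sub hf.1))
    (integrable_div_ofReal_sub hf hε2 (hfar.mono fun _ hs => hs z₀ (mem_ball_self hε2)))
    (F' := fun z s => f s / ((s : ℂ) - z) ^ 2)
    (hf.1.div₀ ((continuous_ofReal.sub continuous_const).pow 2).aestronglyMeasurable)
    (bound := fun s => ((ε / 2) ^ 2)⁻¹ * ‖f s‖) ?_ (hf.norm.const_mul _) ?_).2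
  · refine hfar.mono fun s hs z hz => norm_div_le_inv_mul_norm (pow_pos hε2 2) ?_
    rw [norm_pow]
    exact pow_le_pow_left₀ hε2.le (hs z hz) 2
  · refine hfar.mono fun s hs z hz => hasDerivAt_const_div_const_sub _ ?_
    exact norm_pos_iff.mp (hε2.trans_le (hs z hz))

lemma differentiableOn_cauchyTransform (hf : Integrable f μ) (hS : IsClosed S)
    (hμS : ∀ᵐ (s : ℝ) ∂μ, (s : ℂ) ∈ S) : DifferentiableOn ℂ (cauchyTransform μ f) Sᶜ :=
  fun _ hz => (hasDerivAt_cauchyTransform hf hS hμS hz).differentiableAt.differentiableWithinAt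

lemma tendsto_cauchyTransform (hf : Integrable f μ) (hμS : ∀ᵐ (s : ℝ) ∂μ, (s : ℂ) ∈ S)
    {r : ℝ} (hr : 0 < r) :
    Tendsto (cauchyTransform μ f) (comap (‖·‖) atTop ⊓ 𝓟 {z | r ≤ infDist z S}) (𝓝 0) := by
  rw [← integral_zero ℝ ℂ]
  refine tendsto_integral_filter_of_dominated_convergence (fun s => r⁻¹ * ‖f s‖)
    (Eventually.of_forall (aestronglyMeasurable_div_ofReal_sub hf.1)) ?_
    (hf.norm.const_mul _) ?_
  · refine Eventually.filter_mono inf_le_right (eventually_principal.mpr fun z hz => ?_)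
    refine hμS.mono fun s hs => norm_div_le_inv_mul_norm hr ?_
    rw [← dist_eq_norm, dist_comm]
    exact hz.trans (infDist_le_dist_of_mem hs)
  · refine Eventually.of_forall fun s => ?_
    rw [comap_norm_atTop]
    have h : Tendsto (fun z => f s * ((s : ℂ) - z)⁻¹) (cobounded ℂ) (𝓝 (f s * 0)) :=
      (tendsto_inv₀_cobounded.comp (tendsto_const_sub_cobounded (s : ℂ))).const_mul (f s)
    simpa [div_eq_mul_inv] using h.mono_left inf_le_left

end CauchyTransform

theorem stmt_12_general (ρ : ℝ → ℂ) (zm : ℝ)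
    (hint : IntegrableOn (fun s : ℝ => Real.log (1 - s * ‖ρ s‖ ^ 2)) (Set.Iic zm))
    (δ : ℂ → ℂ)
    (hδ : ∀ z, δ z = Complex.exp ((2 * Real.pi * I)⁻¹ *
      ∫ s in Set.Iic zm, (Real.log (1 - s * ‖ρ s‖ ^ 2) : ℂ) / ((s : ℂ) - z))) :
    AnalyticOn ℂ δ {z : ℂ | z.im = 0 ∧ z.re ≤ zm}ᶜ ∧
    (∀ z ∈ {z : ℂ | z.im = 0 ∧ z.re ≤ zm}ᶜ, δ z ≠ 0) ∧
    Tendsto δ (comap (fun z : ℂ => ‖z‖) atTop ⊓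
      Filter.principal {z : ℂ | 1 ≤ Metric.infDist z {w : ℂ | w.im = 0 ∧ w.re ≤ zm}})
      (nhds 1) := by
  set S : Set ℂ := {z : ℂ | z.im = 0 ∧ z.re ≤ zm}
  have hS : IsClosed S :=
    (isClosed_eq continuous_im continuous_const).inter (isClosed_le continuous_re continuous_const)
  have hμS : ∀ᵐ (s : ℝ) ∂(volume.restrict (Set.Iic zm)), (s : ℂ) ∈ S :=
    (ae_restrict_mem measurableSet_Iic).mono fun s hs => ⟨ofReal_im s, by simpa using hs⟩
  obtain rfl : δ = fun z => exp ((2 * Real.pi * I)⁻¹ *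
      cauchyTransform (volume.restrict (Set.Iic zm))
        (fun s => (Real.log (1 - s * ‖ρ s‖ ^ 2) : ℂ)) z) := funext hδ
  refine ⟨((differentiableOn_cauchyTransform hint.ofReal hS hμS).const_mul _).cexp.analyticOn
    hS.isOpen_compl, fun _ _ => exp_ne_zero _, ?_⟩
  have h := ((tendsto_cauchyTransform hint.ofReal hμS one_pos).const_mul (2 * Real.pi * I)⁻¹).cexp
  rwa [mul_zero, exp_zero] at h

theorem stmt_12 (ρ : ℝ → ℂ) (hρ : Continuous ρ) (zm : ℝ)
    (hpos : ∀ s ≤ zm, 0 < 1 - s * ‖ρ s‖ ^ 2)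
    (hint : IntegrableOn (fun s : ℝ => Real.log (1 - s * ‖ρ s‖ ^ 2)) (Set.Iic zm))
    (δ : ℂ → ℂ)
    (hδ : ∀ z, δ z = Complex.exp ((2 * Real.pi * I)⁻¹ *
      ∫ s in Set.Iic zm, (Real.log (1 - s * ‖ρ s‖ ^ 2) : ℂ) / ((s : ℂ) - z))) :
    AnalyticOn ℂ δ {z : ℂ | z.im = 0 ∧ z.re ≤ zm}ᶜ ∧
    (∀ z ∈ {z : ℂ | z.im = 0 ∧ z.re ≤ zm}ᶜ, δ z ≠ 0) ∧
    Tendsto δ (comap (fun z : ℂ => ‖z‖) atTop ⊓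
      Filter.principal {z : ℂ | 1 ≤ Metric.infDist z {w : ℂ | w.im = 0 ∧ w.re ≤ zm}})
      (nhds 1) :=
  stmt_12_general ρ zm hint δ hδ
end

section
/- Define F : [0, √2/2] × [0, √2] → ℝ via the contour integral 𝓕(x,y) = ∫_{−1}^{1} √(((iτ + y)² + 2y² − 4xy + 1)/(1 − τ²)) · (iτ + 2x − y) dτ (with the branch chosen so the integrand is real; equivalently the real part of the stated integral). Then 𝓕(0,0) = 0 and 𝓕(√2/2, √2/2) = 0. -/
/-!
At `(0, 0)` the radicand is `((iτ)² + 1) / (1 - τ²) = 1`, so the integrand is `iτ`, which has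
zero real part. At `x = y = √2/2` the constant `2y² - 4xy + 1` vanishes, so the radicand is the
square `((iτ + y) / √(1 - τ²))²`; as `Re (iτ + y) > 0` the principal root is that quotient, and the
integrand becomes `(iτ + y)² / √(1 - τ²)` with real part `(1/2 - τ²) / √(1 - τ²)`, the derivative
of `τ √(1 - τ²) / 2`, which vanishes at `±1`. The weight `1 / √(1 - τ²)` is integrable, being the
derivative of `arcsin`.
-/

open Complex MeasureTheory Set

lemma one_sub_sq_pos {τ : ℝ} (hτ : τ ∈ Ioo (-1 : ℝ) 1) : 0 < 1 - τ ^ 2 := by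
  obtain ⟨h₁, h₂⟩ := hτ
  nlinarith

lemma integrableOn_one_div_sqrt_one_sub_sq :
    IntegrableOn (fun τ : ℝ => 1 / √(1 - τ ^ 2)) (Ioo (-1) 1) := by
  refine (intervalIntegral.integrableOn_deriv_of_nonneg Real.continuous_arcsin.continuousOn
    (fun τ hτ => Real.hasDerivAt_arcsin hτ.1.ne' hτ.2.ne) fun τ _ => by positivity).mono_set
    Ioo_subset_Ioc_self

lemma integrableOn_one_div_sqrt_one_sub_sq_smul {E : Type*} [NormedAddCommGroup E]
    [NormedSpace ℝ E] {g : ℝ → E} (hg : ContinuousOn g (Icc (-1) 1)) :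
    IntegrableOn (fun τ : ℝ => (1 / √(1 - τ ^ 2)) • g τ) (Ioo (-1) 1) :=
  integrableOn_one_div_sqrt_one_sub_sq.smul_continuousOn_of_subset hg measurableSet_Ioo
    isCompact_Icc Ioo_subset_Icc_self

lemma integral_one_div_sqrt_one_sub_sq_mul_half_sub_sq :
    ∫ τ in Ioo (-1 : ℝ) 1, 1 / √(1 - τ ^ 2) * (1 / 2 - τ ^ 2) = 0 := by
  have hderiv : ∀ τ ∈ Ioo (-1 : ℝ) 1, HasDerivAt (fun τ => τ * √(1 - τ ^ 2) / 2)
      (1 / √(1 - τ ^ 2) * (1 / 2 - τ ^ 2)) τ := by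
    intro τ hτ
    have hpos := one_sub_sq_pos hτ
    have hsqrt := ((hasDerivAt_pow 2 τ).const_sub 1).sqrt hpos.ne'
    refine (((hasDerivAt_id' τ).mul hsqrt).div_const 2).congr_deriv ?_
    have hs : √(1 - τ ^ 2) ^ 2 = 1 - τ ^ 2 := Real.sq_sqrt hpos.le
    field_simp
    rw [hs]
    norm_num
    ring
  have hint : IntervalIntegrable (fun τ : ℝ => 1 / √(1 - τ ^ 2) * (1 / 2 - τ ^ 2)) volume (-1) 1 :=
    (intervalIntegrable_iff_integrableOn_Ioo_of_le (by norm_num)).2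
      (integrableOn_one_div_sqrt_one_sub_sq_smul (by fun_prop))
  rw [← integral_Ioc_eq_integral_Ioo, ← intervalIntegral.integral_of_le (by norm_num),
    intervalIntegral.integral_eq_sub_of_hasDerivAt_of_le (by norm_num) (by fun_prop) hderiv hint]
  norm_num

lemma re_integral_I_mul_ofReal {α : Type*} [MeasurableSpace α] (μ : Measure α) (f : α → ℝ) :
    (∫ a, I * (f a : ℂ) ∂μ).re = 0 := by
  rw [integral_const_mul, integral_complex_ofReal, mul_re, I_re, I_im, ofReal_re, ofReal_im]
  ring

lemma sq_div_one_sub_sq_cpow_half {w : ℂ} (hw : 0 < w.re) {τ : ℝ} (hτ : τ ∈ Ioo (-1 : ℝ) 1) :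
    (w ^ 2 / (1 - (τ : ℂ) ^ 2)) ^ ((1 : ℂ) / 2) = w / (√(1 - τ ^ 2) : ℝ) := by
  have hs : ((√(1 - τ ^ 2) : ℝ) : ℂ) ^ 2 = 1 - (τ : ℂ) ^ 2 := by
    rw [← ofReal_pow, Real.sq_sqrt (one_sub_sq_pos hτ).le]
    push_cast
    ring
  rw [← hs, ← div_pow, one_div]
  refine sq_cpow_two_inv ?_
  rw [div_ofReal_re]
  exact div_pos hw (Real.sqrt_pos.2 (one_sub_sq_pos hτ))

noncomputable def modulationIntegrand (x y τ : ℝ) : ℂ :=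
  (((I * (τ : ℂ) + (y : ℂ)) ^ 2 + 2 * (y : ℂ) ^ 2 - 4 * (x : ℂ) * (y : ℂ) + 1) /
    (1 - (τ : ℂ) ^ 2)) ^ ((1 : ℂ) / 2) * (I * (τ : ℂ) + 2 * (x : ℂ) - (y : ℂ))

lemma modulationIntegrand_zero_zero {τ : ℝ} (hτ : τ ∈ Ioo (-1 : ℝ) 1) :
    modulationIntegrand 0 0 τ = I * τ := by
  have hne : (1 - (τ : ℂ) ^ 2) ≠ 0 := by exact_mod_cast (one_sub_sq_pos hτ).ne'
  have hnum : (I * (τ : ℂ)) ^ 2 + 1 = 1 - (τ : ℂ) ^ 2 := by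
    linear_combination (τ : ℂ) ^ 2 * I_sq
  simp only [modulationIntegrand, ofReal_zero, add_zero, mul_zero, sub_zero, ne_eq,
    OfNat.ofNat_ne_zero, not_false_eq_true, zero_pow]
  rw [hnum, div_self hne, one_cpow, one_mul]

lemma modulationIntegrand_eq_smul {x y τ : ℝ} (hxy : 2 * y ^ 2 - 4 * x * y + 1 = 0) (hy : 0 < y)
    (hτ : τ ∈ Ioo (-1 : ℝ) 1) :
    modulationIntegrand x y τ = (1 / √(1 - τ ^ 2)) • ((I * τ + y) * (I * τ + 2 * x - y)) := by
  have hre : 0 < (I * (τ : ℂ) + y).re := by simpa using hy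
  have hsq : (I * (τ : ℂ) + y) ^ 2 + 2 * (y : ℂ) ^ 2 - 4 * x * y + 1 = (I * τ + y) ^ 2 := by
    have hxy' : 2 * (y : ℂ) ^ 2 - 4 * x * y + 1 = 0 := by exact_mod_cast hxy
    linear_combination hxy'
  rw [modulationIntegrand, hsq, sq_div_one_sub_sq_cpow_half hre hτ, real_smul]
  push_cast
  ring

lemma re_integral_modulationIntegrand_zero_zero :
    (∫ τ in Ioo (-1 : ℝ) 1, modulationIntegrand 0 0 τ).re = 0 := by
  rw [setIntegral_congr_fun measurableSet_Ioo fun τ hτ => modulationIntegrand_zero_zero hτ,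
    re_integral_I_mul_ofReal]

lemma re_integral_modulationIntegrand_self {y : ℝ} (hy : 2 * y ^ 2 = 1) (hy₀ : 0 < y) :
    (∫ τ in Ioo (-1 : ℝ) 1, modulationIntegrand y y τ).re = 0 := by
  have hre : ∀ τ : ℝ, ((1 / √(1 - τ ^ 2)) • ((I * τ + y) * (I * τ + 2 * y - y))).re
      = 1 / √(1 - τ ^ 2) * (1 / 2 - τ ^ 2) := by
    intro τ
    rw [show I * (τ : ℂ) + 2 * y - y = I * τ + y by ring]
    simp only [smul_re, mul_re, add_re, add_im, mul_im, I_re, I_im, ofReal_re, ofReal_im,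
      smul_eq_mul]
    linear_combination (1 / √(1 - τ ^ 2) / 2) * hy
  have hint := integrableOn_one_div_sqrt_one_sub_sq_smul
    (g := fun τ : ℝ => (I * τ + y) * (I * τ + 2 * y - y)) (by fun_prop)
  rw [setIntegral_congr_fun measurableSet_Ioo fun τ hτ =>
      modulationIntegrand_eq_smul (by linear_combination -hy) hy₀ hτ,
    ← RCLike.re_to_complex, ← integral_re hint]
  simp only [RCLike.re_to_complex, hre]
  exact integral_one_div_sqrt_one_sub_sq_mul_half_sub_sq

theorem stmt_14 (F : ℝ → ℝ → ℝ)
    (hF : ∀ x y, F x y = (∫ τ in Set.Ioo (-1 : ℝ) 1,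
      (((I * (τ : ℂ) + (y : ℂ)) ^ 2 + 2 * (y : ℂ) ^ 2 - 4 * (x : ℂ) * (y : ℂ) + 1) /
          (1 - (τ : ℂ) ^ 2)) ^ ((1 : ℂ) / 2) * (I * (τ : ℂ) + 2 * (x : ℂ) - (y : ℂ))).re) :
    F 0 0 = 0 ∧ F (Real.sqrt 2 / 2) (Real.sqrt 2 / 2) = 0 := by
  have hF' : ∀ x y, F x y = (∫ τ in Ioo (-1 : ℝ) 1, modulationIntegrand x y τ).re := hF
  exact ⟨(hF' 0 0).trans re_integral_modulationIntegrand_zero_zero,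
    (hF' _ _).trans (re_integral_modulationIntegrand_self (by norm_num [div_pow]) (by positivity))⟩
end
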